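/- arXiv:1510.01952 — 2 statements merged into one kernel-verified Lean document; each statement's English description precedes it below -/
import Mathlib

section
/- Let C be the (unique) formal power series over ℚ satisfying C = 1 + x·C² (the Catalan generating function), and let C(x²) denote the series obtained from C by substituting x² for x. Let c_n denote the number of UUD-equivalence classes of Dyck paths of semilength n (so c₀ = 1). Then in the ring of formal power series over ℚ, (∑_{n≥0} c_n xⁿ) · (1 − x(1 + x)·C(x²)) = 1. -/
/-- A path is a list of steps: `true` is an up-step U, `false` is a down-step D. -/
abbrev Step := Bool

/-- The height of the `j`-th lattice point of the path `p`. -/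
def pathHeight (p : List Bool) (j : ℕ) : ℤ :=
  ((p.take j).count true : ℤ) - ((p.take j).count false : ℤ)

/-- A ballot path: every prefix has at least as many U's as D's. -/
def IsBallot (p : List Bool) : Prop :=
  ∀ k : ℕ, (p.take k).count false ≤ (p.take k).count true

/-- A Dyck path: a ballot path with equally many U's and D's. -/
def IsDyck (p : List Bool) : Prop :=
  IsBallot p ∧ p.count true = p.count false

/-- The string `τ` occurs at (0-indexed) position `i` of the path `p`. -/
def OccursAt (τ p : List Bool) (i : ℕ) : Prop :=
  (p.drop i).take τ.length = τ

/-- Two paths are `τ`-equivalent: same length and occurrences of `τ` at the same positions. -/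
def PathEquiv (τ p q : List Bool) : Prop :=
  p.length = q.length ∧ ∀ i : ℕ, OccursAt τ p i ↔ OccursAt τ q i

/-- The setoid of `τ`-equivalence on ballot paths of length `n`. -/
def ballotSetoid (τ : List Bool) (n : ℕ) :
    Setoid {p : List Bool // IsBallot p ∧ p.length = n} where
  r p q := PathEquiv τ p.1 q.1
  iseqv := ⟨fun _ => ⟨rfl, fun _ => Iff.rfl⟩,
            fun h => ⟨h.1.symm, fun i => (h.2 i).symm⟩,
            fun h1 h2 => ⟨h1.1.trans h2.1, fun i => (h1.2 i).trans (h2.2 i)⟩⟩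

/-- The number of `τ`-equivalence classes of ballot paths of length `n`. -/
noncomputable def numBallotClasses (τ : List Bool) (n : ℕ) : ℕ :=
  Nat.card (Quotient (ballotSetoid τ n))

/-- The setoid of `τ`-equivalence on Dyck paths of semilength `n`. -/
def dyckSetoid (τ : List Bool) (n : ℕ) :
    Setoid {p : List Bool // IsDyck p ∧ p.length = 2 * n} where
  r p q := PathEquiv τ p.1 q.1
  iseqv := ⟨fun _ => ⟨rfl, fun _ => Iff.rfl⟩,
            fun h => ⟨h.1.symm, fun i => (h.2 i).symm⟩,
            fun h1 h2 => ⟨h1.1.trans h2.1, fun i => (h1.2 i).trans (h2.2 i)⟩⟩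

/-- The number of `τ`-equivalence classes of Dyck paths of semilength `n`. -/
noncomputable def numDyckClasses (τ : List Bool) (n : ℕ) : ℕ :=
  Nat.card (Quotient (dyckSetoid τ n))

/-!
A UUD-class of Dyck paths is determined by its set of UUD positions, so one counts the sets
that occur. Let `occSets h ℓ` be the family of these sets for paths of length `ℓ` that go from
height `h` down to `0` without going below `0`. A set containing `0` comes from a leading `UUD`
followed by a path from height `h + 1`; a set avoiding `0` is the shift of a set in
`occSets (h ± 1) (ℓ - 1)`. The key observation is `occSets (h + 2) ℓ ⊆ occSets h ℓ`, so from
height `h + 1` only `occSets h (ℓ - 1)` contributes. Hence the generating functions satisfy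
`G (h + 1) = x G h + x³ G (h + 2)` and `G 0 = 1 + (x + x³) G 1`, which forces `G h = yʰ G 0`
with `y = x + x³ y²`, i.e. `y = x C(x⁴)`. Thus `G 0 (1 - (x² + x⁴) C(x⁴)) = 1`, and `G 0` is the
generating function of the class numbers evaluated at `x²`.
-/

open PowerSeries

theorem PowerSeries.expand_injective {R : Type*} [CommRing R] (p : ℕ) (hp : p ≠ 0) :
    Function.Injective (expand p hp : R⟦X⟧ → R⟦X⟧) := fun f g hfg => ext fun n => by
  rw [← coeff_expand_mul p hp f n, hfg, coeff_expand_mul]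

theorem PowerSeries.eq_of_recurrence_of_X_pow_dvd {R : Type*} [CommRing R] {f g : ℕ → R⟦X⟧}
    (h0 : f 0 = g 0)
    (hf : ∀ h, f (h + 1) = X * f h + X ^ 3 * f (h + 2))
    (hg : ∀ h, g (h + 1) = X * g h + X ^ 3 * g (h + 2))
    (hfX : ∀ h, X ^ h ∣ f h) (hgX : ∀ h, X ^ h ∣ g h) : f = g := by
  have hdX : ∀ k h, X ^ (h + 2 * k) ∣ f h - g h := by
    intro k
    induction k with
    | zero => exact fun h => dvd_sub (hfX h) (hgX h)
    | succ k ihk =>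
      intro h
      induction h with
      | zero => simp [h0]
      | succ h ihh =>
        have hrec : f (h + 1) - g (h + 1) =
            X * (f h - g h) + X ^ 3 * (f (h + 2) - g (h + 2)) := by
          rw [hf, hg]; ring
        rw [hrec]
        refine dvd_add ?_ ?_
        · rw [show h + 1 + 2 * (k + 1) = 1 + (h + 2 * (k + 1)) by ring, pow_add, pow_one]
          exact mul_dvd_mul_left X ihh
        · calc X ^ (h + 1 + 2 * (k + 1)) ∣ X ^ 3 * X ^ (h + 2 + 2 * k) := by
                rw [← pow_add]; exact pow_dvd_pow _ (by omega)
            _ ∣ X ^ 3 * (f (h + 2) - g (h + 2)) := mul_dvd_mul_left _ (ihk (h + 2))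
  funext h
  refine sub_eq_zero.1 (ext fun m => ?_)
  exact X_pow_dvd_iff.1 (hdX (m + 1) h) m (by omega)

namespace DyckUUD

local notation "UUD" => [true, true, false]

inductive IsDyckFrom : ℕ → List Bool → Prop
  | nil : IsDyckFrom 0 []
  | up {h : ℕ} {w : List Bool} : IsDyckFrom (h + 1) w → IsDyckFrom h (true :: w)
  | down {h : ℕ} {w : List Bool} : IsDyckFrom h w → IsDyckFrom (h + 1) (false :: w)

lemma isDyckFrom_true_cons {h : ℕ} {w : List Bool} :
    IsDyckFrom h (true :: w) ↔ IsDyckFrom (h + 1) w :=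
  ⟨fun | .up hw => hw, .up⟩

lemma isDyckFrom_succ_false_cons {h : ℕ} {w : List Bool} :
    IsDyckFrom (h + 1) (false :: w) ↔ IsDyckFrom h w :=
  ⟨fun | .down hw => hw, .down⟩

lemma not_isDyckFrom_zero_false_cons (w : List Bool) : ¬ IsDyckFrom 0 (false :: w) :=
  nofun

lemma IsDyckFrom.le_length {h : ℕ} {w : List Bool} (hw : IsDyckFrom h w) : h ≤ w.length := by
  induction hw <;> simp <;> omega

lemma isDyckFrom_iff_count {h : ℕ} {w : List Bool} : IsDyckFrom h w ↔
    (∀ k, (w.take k).count false ≤ h + (w.take k).count true) ∧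
      h + w.count true = w.count false := by
  induction w generalizing h with
  | nil => exact ⟨fun | .nil => by simp, fun ⟨_, hw⟩ => by simp at hw; exact hw ▸ .nil⟩
  | cons b w ih =>
    have forall_nat {P : ℕ → Prop} : (∀ k, P k) ↔ P 0 ∧ ∀ k, P (k + 1) :=
      ⟨fun hP => ⟨hP 0, fun k => hP (k + 1)⟩, fun ⟨h0, hs⟩ k => k.casesOn h0 hs⟩
    rw [forall_nat]
    simp only [List.take_zero, List.take_succ_cons]
    cases b
    · obtain _ | h := h
      · simp only [not_isDyckFrom_zero_false_cons, false_iff]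
        rintro ⟨⟨-, hk⟩, -⟩
        simpa using hk 0
      · rw [isDyckFrom_succ_false_cons, ih]
        simp only [List.count_nil, List.count_cons_self, List.count_cons_of_ne Bool.false_ne_true,
          add_zero, zero_le, true_and]
        exact and_congr (forall_congr' fun k => by omega) (by omega)
    · rw [isDyckFrom_true_cons, ih]
      simp only [List.count_nil, List.count_cons_self,
        List.count_cons_of_ne Bool.false_ne_true.symm, add_zero, zero_le, true_and]
      exact and_congr (forall_congr' fun k => by omega) (by omega)

lemma IsDyckFrom.even_add_length {h : ℕ} {w : List Bool} (hw : IsDyckFrom h w) :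
    Even (h + w.length) := by
  obtain ⟨-, hcount⟩ := isDyckFrom_iff_count.1 hw
  exact ⟨w.count false, by rw [← List.count_true_add_count_false]; omega⟩

lemma isDyck_iff_isDyckFrom_zero {p : List Bool} : IsDyck p ↔ IsDyckFrom 0 p := by
  simp [IsDyck, IsBallot, isDyckFrom_iff_count]

def occurrences (τ w : List Bool) : Set ℕ := {i | OccursAt τ w i}

lemma pathEquiv_iff {τ p q : List Bool} :
    PathEquiv τ p q ↔ p.length = q.length ∧ occurrences τ p = occurrences τ q := by
  simp [PathEquiv, occurrences, Set.ext_iff]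

theorem numDyckClasses_eq_ncard (τ : List Bool) (n : ℕ) :
    numDyckClasses τ n = (occurrences τ '' {p | IsDyck p ∧ p.length = 2 * n}).ncard := by
  let f : {p : List Bool // IsDyck p ∧ p.length = 2 * n} → Set ℕ := fun p => occurrences τ p.1
  have hker : ∀ p q, dyckSetoid τ n p q ↔ Setoid.ker f p q := fun p q => by
    change PathEquiv τ p.1 q.1 ↔ f p = f q
    simp only [pathEquiv_iff, p.2.2, q.2.2, true_and, f]
  rw [numDyckClasses, Nat.card_congr ((Quotient.congrRight hker).trans
    (Setoid.quotientKerEquivRange f)), Nat.card_coe_set_eq]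
  congr 1
  ext S
  simp [f]

def shift (d : ℕ) (S : Set ℕ) : Set ℕ := (· + d) '' S

@[simp] lemma add_mem_shift {d i : ℕ} {S : Set ℕ} : i + d ∈ shift d S ↔ i ∈ S :=
  (add_left_injective d).mem_set_image

lemma zero_notMem_shift_succ {d : ℕ} (S : Set ℕ) : 0 ∉ shift (d + 1) S := by
  simp [shift]

lemma shift_shift {d e : ℕ} (S : Set ℕ) : shift d (shift e S) = shift (e + d) S := by
  simp only [shift, Set.image_image, add_assoc]

lemma shift_injective (d : ℕ) : Function.Injective (shift d) :=
  Set.image_injective.2 (add_left_injective d)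

lemma succ_mem_occurrences_cons {τ w : List Bool} {b : Bool} {i : ℕ} :
    i + 1 ∈ occurrences τ (b :: w) ↔ i ∈ occurrences τ w := by
  simp [occurrences, OccursAt]

lemma occurrences_cons_of_zero_notMem {τ w : List Bool} {b : Bool}
    (h0 : 0 ∉ occurrences τ (b :: w)) : occurrences τ (b :: w) = shift 1 (occurrences τ w) := by
  ext (_ | i)
  · simp [h0, zero_notMem_shift_succ]
  · rw [succ_mem_occurrences_cons, add_mem_shift]

lemma occurrences_cons_of_zero_mem {τ w : List Bool} {b : Bool}
    (h0 : 0 ∈ occurrences τ (b :: w)) :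
    occurrences τ (b :: w) = insert 0 (shift 1 (occurrences τ w)) := by
  ext (_ | i)
  · simp [h0]
  · rw [succ_mem_occurrences_cons, Set.mem_insert_iff, add_mem_shift]
    simp

lemma zero_mem_occurrences_uud_iff {w : List Bool} :
    0 ∈ occurrences UUD w ↔ ∃ v, w = true :: true :: false :: v := by
  constructor
  · intro h
    rcases w with _ | ⟨a, _ | ⟨b, _ | ⟨c, v⟩⟩⟩ <;>
      simp_all [occurrences, OccursAt]
  · rintro ⟨v, rfl⟩
    simp [occurrences, OccursAt]

lemma occurrences_uud_false_cons (w : List Bool) :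
    occurrences UUD (false :: w) = shift 1 (occurrences UUD w) :=
  occurrences_cons_of_zero_notMem (by simp [zero_mem_occurrences_uud_iff])

lemma occurrences_uud_true_false_cons (w : List Bool) :
    occurrences UUD (true :: false :: w) = shift 2 (occurrences UUD w) := by
  rw [occurrences_cons_of_zero_notMem (by simp [zero_mem_occurrences_uud_iff]),
    occurrences_uud_false_cons, shift_shift]

lemma occurrences_uud_true_cons_of_zero_mem {w : List Bool} (h0 : 0 ∈ occurrences UUD w) :
    occurrences UUD (true :: w) = shift 1 (occurrences UUD w) := by
  obtain ⟨v, rfl⟩ := zero_mem_occurrences_uud_iff.1 h0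
  exact occurrences_cons_of_zero_notMem (by simp [zero_mem_occurrences_uud_iff])

lemma occurrences_uud_block (w : List Bool) :
    occurrences UUD (true :: true :: false :: w) = insert 0 (shift 3 (occurrences UUD w)) := by
  rw [occurrences_cons_of_zero_mem (zero_mem_occurrences_uud_iff.2 ⟨w, rfl⟩),
    occurrences_uud_true_false_cons, shift_shift]

def occSets (h ℓ : ℕ) : Set (Set ℕ) :=
  occurrences UUD '' {w | w.length = ℓ ∧ IsDyckFrom h w}

lemma occSets_finite (h ℓ : ℕ) : (occSets h ℓ).Finite :=
  ((List.finite_length_eq Bool ℓ).subset fun _ hw => hw.1).image _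

lemma occSets_eq_empty_of_lt {h ℓ : ℕ} (hℓ : ℓ < h) : occSets h ℓ = ∅ := by
  rw [occSets, Set.image_eq_empty, Set.eq_empty_iff_forall_notMem]
  rintro w ⟨rfl, hw⟩
  exact absurd hw.le_length (by omega)

lemma occSets_zero_eq_empty_of_odd {ℓ : ℕ} (hℓ : ¬ 2 ∣ ℓ) : occSets 0 ℓ = ∅ := by
  rw [occSets, Set.image_eq_empty, Set.eq_empty_iff_forall_notMem]
  rintro w ⟨rfl, hw⟩
  exact hℓ (by simpa using hw.even_add_length.two_dvd)

lemma occSets_zero_zero : occSets 0 0 = {∅} := by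
  have : {w : List Bool | w.length = 0 ∧ IsDyckFrom 0 w} = {[]} := by
    ext w
    exact ⟨fun ⟨hw, _⟩ => List.eq_nil_of_length_eq_zero hw, fun hw => hw ▸ ⟨rfl, .nil⟩⟩
  rw [occSets, this, Set.image_singleton]
  simp [occurrences, OccursAt]

lemma shift_one_mem_occSets_succ {h ℓ : ℕ} {S : Set ℕ} (hS : S ∈ occSets h ℓ) :
    shift 1 S ∈ occSets (h + 1) (ℓ + 1) := by
  obtain ⟨w, ⟨rfl, hw⟩, rfl⟩ := hS
  exact ⟨false :: w, ⟨rfl, .down hw⟩, occurrences_uud_false_cons w⟩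

lemma shift_two_mem_occSets {h ℓ : ℕ} {S : Set ℕ} (hS : S ∈ occSets h ℓ) :
    shift 2 S ∈ occSets h (ℓ + 2) := by
  obtain ⟨w, ⟨rfl, hw⟩, rfl⟩ := hS
  exact ⟨true :: false :: w, ⟨rfl, .up (.down hw)⟩, occurrences_uud_true_false_cons w⟩

lemma insert_zero_shift_three_mem_occSets {h ℓ : ℕ} {S : Set ℕ} (hS : S ∈ occSets (h + 1) ℓ) :
    insert 0 (shift 3 S) ∈ occSets h (ℓ + 3) := by
  obtain ⟨w, ⟨rfl, hw⟩, rfl⟩ := hS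
  exact ⟨true :: true :: false :: w, ⟨rfl, .up (.up (.down hw))⟩, occurrences_uud_block w⟩

lemma exists_of_zero_mem_occSets {h ℓ : ℕ} {S : Set ℕ} (hS : S ∈ occSets h ℓ) (h0 : 0 ∈ S) :
    ∃ ℓ' S', ℓ = ℓ' + 3 ∧ S' ∈ occSets (h + 1) ℓ' ∧ S = insert 0 (shift 3 S') := by
  obtain ⟨w, ⟨rfl, hw⟩, rfl⟩ := hS
  obtain ⟨v, rfl⟩ := zero_mem_occurrences_uud_iff.1 h0
  refine ⟨v.length, occurrences UUD v, rfl, ⟨v, ⟨rfl, ?_⟩, rfl⟩, occurrences_uud_block v⟩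
  exact isDyckFrom_succ_false_cons.1 (isDyckFrom_true_cons.1 (isDyckFrom_true_cons.1 hw))

lemma exists_of_zero_notMem_occSets {h ℓ : ℕ} {S : Set ℕ} (hS : S ∈ occSets h (ℓ + 1))
    (h0 : 0 ∉ S) : ∃ S', S = shift 1 S' ∧
      (S' ∈ occSets (h + 1) ℓ ∨ 0 < h ∧ S' ∈ occSets (h - 1) ℓ) := by
  obtain ⟨_ | ⟨b, w⟩, ⟨hlen, hw⟩, rfl⟩ := hS
  · simp at hlen
  refine ⟨occurrences UUD w, occurrences_cons_of_zero_notMem h0, ?_⟩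
  replace hlen : w.length = ℓ := by simpa using hlen
  cases hw with
  | up hw => exact Or.inl ⟨w, ⟨hlen, hw⟩, rfl⟩
  | @down h _ hw => exact Or.inr ⟨h.succ_pos, w, ⟨hlen, hw⟩, rfl⟩

-- The inclusion is a hypothesis so that `occSets_add_two_subset` can use this inside its induction.
lemma shift_one_mem_occSets_zero_of_subset {ℓ : ℕ} (hsub : occSets 2 ℓ ⊆ occSets 0 ℓ)
    {S : Set ℕ} (hS : S ∈ occSets 1 (ℓ + 1)) : shift 1 S ∈ occSets 0 (ℓ + 2) := by
  by_cases h0 : 0 ∈ S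
  · obtain ⟨w, ⟨hlen, hw⟩, rfl⟩ := hS
    exact ⟨true :: w, ⟨by simp [hlen], .up hw⟩,
      occurrences_uud_true_cons_of_zero_mem h0⟩
  · obtain ⟨S', rfl, hS' | ⟨-, hS'⟩⟩ := exists_of_zero_notMem_occSets hS h0
    · rw [shift_shift]
      exact shift_two_mem_occSets (hsub hS')
    · rw [shift_shift]
      exact shift_two_mem_occSets hS'

theorem occSets_add_two_subset (h ℓ : ℕ) : occSets (h + 2) ℓ ⊆ occSets h ℓ := by
  induction ℓ using Nat.strong_induction_on generalizing h with
  | _ ℓ ih =>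
  intro S hS
  by_cases h0 : 0 ∈ S
  · obtain ⟨ℓ, S', rfl, hS', rfl⟩ := exists_of_zero_mem_occSets hS h0
    exact insert_zero_shift_three_mem_occSets (ih ℓ (by omega) (h + 1) hS')
  obtain _ | ℓ := ℓ
  · simp [occSets_eq_empty_of_lt] at hS
  obtain ⟨S', rfl, hS'⟩ := exists_of_zero_notMem_occSets hS h0
  replace hS' : S' ∈ occSets (h + 1) ℓ := by
    rcases hS' with hS' | ⟨-, hS'⟩
    · exact ih ℓ (by omega) (h + 1) hS'
    · simpa using hS'
  obtain _ | h := h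
  · obtain _ | ℓ := ℓ
    · simp [occSets_eq_empty_of_lt] at hS'
    · exact shift_one_mem_occSets_zero_of_subset (ih ℓ (by omega) 0) hS'
  · exact shift_one_mem_occSets_succ (ih ℓ (by omega) h hS')

lemma shift_one_mem_occSets_zero {ℓ : ℕ} {S : Set ℕ} (hS : S ∈ occSets 1 ℓ) :
    shift 1 S ∈ occSets 0 (ℓ + 1) := by
  obtain _ | ℓ := ℓ
  · simp [occSets_eq_empty_of_lt] at hS
  · exact shift_one_mem_occSets_zero_of_subset (occSets_add_two_subset 0 ℓ) hS

lemma occSets_inter_zero_mem (h ℓ : ℕ) :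
    occSets h (ℓ + 3) ∩ {S | 0 ∈ S} = (fun S => insert 0 (shift 3 S)) '' occSets (h + 1) ℓ := by
  ext S
  constructor
  · rintro ⟨hS, h0⟩
    obtain ⟨ℓ', S', hℓ, hS', rfl⟩ := exists_of_zero_mem_occSets hS h0
    obtain rfl : ℓ = ℓ' := by omega
    exact ⟨S', hS', rfl⟩
  · rintro ⟨S', hS', rfl⟩
    exact ⟨insert_zero_shift_three_mem_occSets hS', Set.mem_insert 0 _⟩

lemma occSets_inter_zero_mem_of_lt {h ℓ : ℕ} (hℓ : ℓ < 3) :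
    occSets h ℓ ∩ {S | 0 ∈ S} = ∅ := by
  refine Set.eq_empty_of_forall_notMem fun S ⟨hS, h0⟩ => ?_
  obtain ⟨ℓ', -, hℓ', -⟩ := exists_of_zero_mem_occSets hS h0
  omega

lemma occSets_succ_diff_zero_mem (h ℓ : ℕ) :
    occSets (h + 1) (ℓ + 1) \ {S | 0 ∈ S} = shift 1 '' occSets h ℓ := by
  ext S
  constructor
  · rintro ⟨hS, h0⟩
    obtain ⟨S', rfl, hS' | ⟨-, hS'⟩⟩ := exists_of_zero_notMem_occSets hS h0
    · exact ⟨S', occSets_add_two_subset h ℓ hS', rfl⟩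
    · exact ⟨S', by simpa using hS', rfl⟩
  · rintro ⟨S', hS', rfl⟩
    exact ⟨shift_one_mem_occSets_succ hS', zero_notMem_shift_succ S'⟩

lemma occSets_zero_diff_zero_mem (ℓ : ℕ) :
    occSets 0 (ℓ + 1) \ {S | 0 ∈ S} = shift 1 '' occSets 1 ℓ := by
  ext S
  constructor
  · rintro ⟨hS, h0⟩
    obtain ⟨S', rfl, hS' | ⟨h, -⟩⟩ := exists_of_zero_notMem_occSets hS h0
    · exact ⟨S', hS', rfl⟩
    · exact absurd h (lt_irrefl 0)
  · rintro ⟨S', hS', rfl⟩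
    exact ⟨shift_one_mem_occSets_zero hS', zero_notMem_shift_succ S'⟩

lemma insert_zero_shift_injective {d : ℕ} :
    Function.Injective fun S => insert 0 (shift (d + 1) S) := by
  intro A B hAB
  ext i
  simpa using congrArg (i + (d + 1) ∈ ·) hAB

noncomputable def classGF (h : ℕ) : ℚ⟦X⟧ := mk fun ℓ => ((occSets h ℓ).ncard : ℚ)

lemma coeff_classGF (h ℓ : ℕ) : coeff ℓ (classGF h) = ((occSets h ℓ).ncard : ℚ) :=
  coeff_mk _ _

lemma coeff_classGF_eq_add (h ℓ : ℕ) : coeff ℓ (classGF h) =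
    ((occSets h ℓ ∩ {S | 0 ∈ S}).ncard + (occSets h ℓ \ {S | 0 ∈ S}).ncard : ℚ) := by
  rw [coeff_classGF, ← Set.ncard_inter_add_ncard_sdiff_eq_ncard _ _ (occSets_finite h ℓ),
    Nat.cast_add]

lemma coeff_X_pow_three_mul_classGF (h ℓ : ℕ) :
    coeff ℓ (X ^ 3 * classGF (h + 1)) = ((occSets h ℓ ∩ {S | 0 ∈ S}).ncard : ℚ) := by
  rw [coeff_X_pow_mul']
  split_ifs with hℓ
  · obtain ⟨ℓ, rfl⟩ := Nat.exists_eq_add_of_le' hℓ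
    rw [Nat.add_sub_cancel, occSets_inter_zero_mem, coeff_classGF,
      Set.ncard_image_of_injective _ insert_zero_shift_injective]
  · rw [occSets_inter_zero_mem_of_lt (by omega), Set.ncard_empty, Nat.cast_zero]

lemma coeff_X_mul_classGF (h ℓ : ℕ) :
    coeff ℓ (X * classGF h) = ((occSets (h + 1) ℓ \ {S | 0 ∈ S}).ncard : ℚ) := by
  obtain _ | ℓ := ℓ
  · simp [occSets_eq_empty_of_lt]
  · rw [coeff_succ_X_mul, occSets_succ_diff_zero_mem,
      Set.ncard_image_of_injective _ (shift_injective 1), coeff_classGF]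

lemma classGF_succ (h : ℕ) : classGF (h + 1) = X * classGF h + X ^ 3 * classGF (h + 2) := by
  ext ℓ
  rw [coeff_classGF_eq_add, map_add, coeff_X_mul_classGF, coeff_X_pow_three_mul_classGF, add_comm]

lemma classGF_zero : classGF 0 = 1 + (X + X ^ 3) * classGF 1 := by
  ext (_ | ℓ)
  · simp [coeff_classGF, occSets_zero_zero]
  · rw [coeff_classGF_eq_add, occSets_zero_diff_zero_mem,
      Set.ncard_image_of_injective _ (shift_injective 1), ← coeff_classGF,
      ← coeff_X_pow_three_mul_classGF, map_add, coeff_one, add_mul, map_add,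
      coeff_succ_X_mul]
    simp [add_comm]

lemma X_pow_dvd_classGF (h : ℕ) : X ^ h ∣ classGF h := by
  refine X_pow_dvd_iff.2 fun ℓ hℓ => ?_
  rw [coeff_classGF, occSets_eq_empty_of_lt hℓ, Set.ncard_empty, Nat.cast_zero]

lemma classGF_eq_pow_mul {y : ℚ⟦X⟧} (hy : y = X + X ^ 3 * y ^ 2) (h : ℕ) :
    classGF h = y ^ h * classGF 0 := by
  have hXy : X ∣ y := ⟨1 + X ^ 2 * y ^ 2, by linear_combination hy⟩
  refine congrFun (eq_of_recurrence_of_X_pow_dvd (g := fun h => y ^ h * classGF 0) (by simp)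
    classGF_succ (fun h => ?_) X_pow_dvd_classGF
    (fun h => (pow_dvd_pow_of_dvd hXy h).mul_right _)) h
  linear_combination (y ^ h * classGF 0) * hy

lemma classGF_zero_mul {y : ℚ⟦X⟧} (hy : y = X + X ^ 3 * y ^ 2) :
    classGF 0 * (1 - (X + X ^ 3) * y) = 1 := by
  linear_combination classGF_zero + (X + X ^ 3) * classGF_eq_pow_mul hy 1

lemma expand_two_numDyckClasses :
    expand 2 two_ne_zero (mk fun n => (numDyckClasses [true, true, false] n : ℚ)) = classGF 0 := by
  ext m
  rw [coeff_expand, coeff_classGF]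
  split_ifs with hm
  · obtain ⟨n, rfl⟩ := hm
    rw [coeff_mk, Nat.mul_div_cancel_left n two_pos, numDyckClasses_eq_ncard, occSets]
    simp only [isDyck_iff_isDyckFrom_zero, and_comm]
  · rw [occSets_zero_eq_empty_of_odd hm, Set.ncard_empty, Nat.cast_zero]

end DyckUUD

open PowerSeries in
/-- the generating function of the numbers of UUD-equivalence classes of
Dyck paths satisfies `F (1 - x(1+x) C(x^2)) = 1`, where `C` is the Catalan generating
function and `N = C(x^2)` its substitution at `x^2`. -/
theorem uud_dyck_classes_gf (C N : PowerSeries ℚ)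
    (hC : C = 1 + X * C ^ 2)
    (hN : ∀ n : ℕ, (coeff n) N = if 2 ∣ n then (coeff (n / 2)) C else 0) :
    (PowerSeries.mk fun n => (numDyckClasses [true, true, false] n : ℚ)) *
      (1 - X * (1 + X) * N) = 1 := by
  have hNC : N = expand 2 two_ne_zero C := ext fun n => by rw [hN, coeff_expand]
  have hy : X * expand 2 two_ne_zero N = X + X ^ 3 * (X * expand 2 two_ne_zero N) ^ 2 := by
    conv_lhs => rw [hNC, hC]
    simp only [hNC, map_add, map_one, map_mul, map_pow, expand_X]
    ring
  apply expand_injective 2 two_ne_zero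
  rw [map_mul, DyckUUD.expand_two_numDyckClasses, map_one]
  simp only [map_sub, map_one, map_mul, map_add, expand_X]
  linear_combination DyckUUD.classGF_zero_mul hy
end

section
/- For every integer n ≥ 0, the number of DUU-equivalence classes of Dyck paths of semilength n + 1 equals the number of UUD-equivalence classes of Dyck paths of semilength n. -/
/-!
A `τ`-class is determined by its set of occurrence positions, so it suffices to show that a set
`S` is the set of `DUU`-positions of a Dyck path of semilength `n + 1` iff `S - 1` is the set of
`UUD`-positions of one of semilength `n`. Given the positions, build a path greedily: put the
blocks there and join them by the lowest possible fillers without `UU`, which create no further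
occurrences of either pattern. Both blocks rise by one, so this greedy path stays below (with the
same parity) any path having either pattern at those positions, hence it returns to the axis
whenever such a path exists. For `DUU` it runs one unit higher, between an initial `U` and a
final `D`, which accounts for the shift.
-/
local notation "UUD" => ([true, true, false] : List Bool)
local notation "DUU" => ([false, true, true] : List Bool)

def netHeight (w : List Bool) : ℤ := w.count true - w.count false

@[simp] lemma netHeight_nil : netHeight [] = 0 := by simp [netHeight]

@[simp] lemma netHeight_cons (a : Bool) (w : List Bool) :
    netHeight (a :: w) = (if a then 1 else -1) + netHeight w := by
  cases a <;> simp [netHeight] <;> ring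

@[simp] lemma netHeight_append (A B : List Bool) :
    netHeight (A ++ B) = netHeight A + netHeight B := by
  simp only [netHeight, List.count_append]; push_cast; ring

lemma pathHeight_eq_netHeight_take (w : List Bool) (k : ℕ) :
    pathHeight w k = netHeight (w.take k) :=
  rfl

@[simp] lemma pathHeight_zero (w : List Bool) : pathHeight w 0 = 0 := by
  simp [pathHeight_eq_netHeight_take]

lemma pathHeight_of_length_le {w : List Bool} {k : ℕ} (hk : w.length ≤ k) :
    pathHeight w k = netHeight w := by
  rw [pathHeight_eq_netHeight_take, List.take_of_length_le hk]

lemma pathHeight_cons_succ (a : Bool) (w : List Bool) (k : ℕ) :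
    pathHeight (a :: w) (k + 1) = (if a then 1 else -1) + pathHeight w k := by
  simp [pathHeight_eq_netHeight_take]

lemma pathHeight_append (A B : List Bool) (k : ℕ) :
    pathHeight (A ++ B) k = pathHeight A k + pathHeight B (k - A.length) := by
  simp [pathHeight_eq_netHeight_take, List.take_append]

lemma pathHeight_add (w : List Bool) (a d : ℕ) :
    pathHeight w (a + d) = pathHeight w a + netHeight ((w.drop a).take d) := by
  simp [pathHeight_eq_netHeight_take, List.take_add]

/-- The height moves by at most `d` over `d` steps, with the parity of `d`. -/
lemma exists_pathHeight_add (w : List Bool) {a d : ℕ} (h : a + d ≤ w.length) :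
    ∃ u v : ℕ, u + v = d ∧ pathHeight w (a + d) = pathHeight w a + u - v := by
  refine ⟨((w.drop a).take d).count true, ((w.drop a).take d).count false, ?_, ?_⟩
  · rw [List.count_true_add_count_false, List.length_take, List.length_drop]; omega
  · rw [pathHeight_add, netHeight]; ring

lemma occursAt_iff_prefix {τ w : List Bool} {i : ℕ} : OccursAt τ w i ↔ τ <+: w.drop i := by
  rw [List.prefix_iff_eq_take, eq_comm]; rfl

instance (τ w : List Bool) (i : ℕ) : Decidable (OccursAt τ w i) :=
  inferInstanceAs (Decidable (_ = _))

lemma occursAt_cons_succ {τ w : List Bool} {a : Bool} {i : ℕ} :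
    OccursAt τ (a :: w) (i + 1) ↔ OccursAt τ w i :=
  Iff.rfl

namespace OccursAt

variable {τ w : List Bool} {i : ℕ}

lemma add_length_le (hτ : τ ≠ []) (h : OccursAt τ w i) : i + τ.length ≤ w.length := by
  have := (occursAt_iff_prefix.mp h).length_le
  have : 0 < τ.length := List.length_pos_iff.mpr hτ
  grind [List.length_drop]

lemma isInfix (h : OccursAt τ w i) : τ <:+: w :=
  (occursAt_iff_prefix.mp h).isInfix.trans (List.drop_suffix i w).isInfix

lemma of_prefix {σ : List Bool} (hσ : σ <+: τ) (h : OccursAt τ w i) : OccursAt σ w i :=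
  occursAt_iff_prefix.mpr (hσ.trans (occursAt_iff_prefix.mp h))

lemma pathHeight_add_length (h : OccursAt τ w i) :
    pathHeight w (i + τ.length) = pathHeight w i + netHeight τ := by
  rw [pathHeight_add, h]

end OccursAt

lemma occursAt_append_left {τ A B : List Bool} {i : ℕ} (hi : i + τ.length ≤ A.length) :
    OccursAt τ (A ++ B) i ↔ OccursAt τ A i := by
  unfold OccursAt
  rw [List.drop_append_of_le_length (by omega), List.take_append_of_le_length (by simp; omega)]

lemma occursAt_append_length_add {τ A B : List Bool} {j : ℕ} :
    OccursAt τ (A ++ B) (A.length + j) ↔ OccursAt τ B j := by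
  simp [OccursAt, List.drop_append, List.drop_eq_nil_of_le]

lemma occursAt_append_singleton {τ w : List Bool} {x : Bool} {i : ℕ}
    (hτ : τ.getLast? ≠ some x) : OccursAt τ (w ++ [x]) i ↔ OccursAt τ w i := by
  rcases le_or_gt i w.length with hi | hi
  · rw [occursAt_iff_prefix, occursAt_iff_prefix, List.drop_append_of_le_length hi,
      List.prefix_concat_iff, or_iff_right]
    rintro rfl
    simp at hτ
  · unfold OccursAt
    rw [List.drop_eq_nil_of_le (by simp; omega), List.drop_eq_nil_of_le hi.le]

def IsUnbordered (τ : List Bool) : Prop :=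
  ∀ d < τ.length, 0 < d → ¬ τ.drop d <+: τ

instance (τ : List Bool) : Decidable (IsUnbordered τ) :=
  inferInstanceAs (Decidable (∀ d < τ.length, _))

lemma IsUnbordered.add_length_le {τ w : List Bool} {i j : ℕ} (hτ : IsUnbordered τ)
    (hi : OccursAt τ w i) (hj : OccursAt τ w j) (hij : i < j) : i + τ.length ≤ j := by
  by_contra! hlt
  obtain ⟨t, ht⟩ := occursAt_iff_prefix.mp hi
  have hdrop : τ.drop (j - i) <+: w.drop j := by
    have : w.drop j = (w.drop i).drop (j - i) := by rw [List.drop_drop]; congr 1; omega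
    rw [this, ← ht, List.drop_append_of_le_length (by omega)]
    exact List.prefix_append _ _
  exact hτ (j - i) (by omega) (by omega)
    (List.prefix_of_prefix_length_le hdrop (occursAt_iff_prefix.mp hj) (by simp))

def BallotFrom (h : ℤ) (w : List Bool) : Prop :=
  ∀ k, 0 ≤ h + pathHeight w k

lemma isBallot_iff_ballotFrom_zero {p : List Bool} : IsBallot p ↔ BallotFrom 0 p := by
  refine forall_congr' fun k => ?_
  rw [zero_add, pathHeight_eq_netHeight_take, netHeight]
  omega

namespace BallotFrom

variable {h : ℤ} {w : List Bool}

lemma mono {h' : ℤ} (hw : BallotFrom h w) (hh : h ≤ h') : BallotFrom h' w :=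
  fun k => (hw k).trans (by omega)

lemma nonneg (hw : BallotFrom h w) : 0 ≤ h := by simpa using hw 0

lemma nonneg_add_netHeight (hw : BallotFrom h w) : 0 ≤ h + netHeight w := by
  simpa [pathHeight_of_length_le le_rfl] using hw w.length

end BallotFrom

lemma ballotFrom_nil {h : ℤ} : BallotFrom h [] ↔ 0 ≤ h := by
  simp [BallotFrom, pathHeight_eq_netHeight_take]

lemma ballotFrom_cons {h : ℤ} {a : Bool} {w : List Bool} :
    BallotFrom h (a :: w) ↔ 0 ≤ h ∧ BallotFrom (h + if a then 1 else -1) w := by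
  refine ⟨fun hw => ⟨hw.nonneg, fun k => ?_⟩, fun ⟨h0, hw⟩ k => ?_⟩
  · have := hw (k + 1)
    rw [pathHeight_cons_succ] at this
    omega
  · rcases k with _ | k
    · simpa using h0
    · have := hw k
      rw [pathHeight_cons_succ]
      omega

lemma ballotFrom_append {h : ℤ} {A B : List Bool} :
    BallotFrom h (A ++ B) ↔ BallotFrom h A ∧ BallotFrom (h + netHeight A) B := by
  refine ⟨fun hw => ⟨fun k => ?_, fun k => ?_⟩, fun ⟨hA, hB⟩ k => ?_⟩
  · rcases le_or_gt k A.length with hk | hk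
    · simpa [pathHeight_append, Nat.sub_eq_zero_of_le hk] using hw k
    · simpa [pathHeight_append, pathHeight_of_length_le hk.le,
        pathHeight_of_length_le (le_refl A.length)] using hw A.length
  · have := hw (A.length + k)
    rw [pathHeight_append, pathHeight_of_length_le (by omega), Nat.add_sub_cancel_left] at this
    linarith
  · rw [pathHeight_append]
    rcases le_or_gt k A.length with hk | hk
    · simpa [Nat.sub_eq_zero_of_le hk] using hA k
    · have := hB (k - A.length)
      rw [pathHeight_of_length_le hk.le]
      linarith

lemma isDyck_iff {p : List Bool} : IsDyck p ↔ BallotFrom 0 p ∧ netHeight p = 0 := by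
  rw [IsDyck, isBallot_iff_ballotFrom_zero, netHeight, sub_eq_zero, Nat.cast_inj]

lemma isDyck_cons_append {w : List Bool} :
    IsDyck (true :: (w ++ [false])) ↔ BallotFrom 1 w ∧ netHeight w = 0 := by
  simp only [isDyck_iff, ballotFrom_cons, ballotFrom_append, ballotFrom_nil, netHeight_cons,
    netHeight_append, if_true]
  constructor
  · rintro ⟨⟨-, hw, -⟩, hh⟩
    exact ⟨by simpa using hw, by simpa using hh⟩
  · rintro ⟨hw, hh⟩
    refine ⟨⟨le_rfl, by simpa using hw, ?_⟩, ?_⟩ <;> simp [hh]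

lemma IsDyck.exists_eq_cons_append {p : List Bool} (hp : IsDyck p) (hne : p ≠ []) :
    ∃ w, p = true :: (w ++ [false]) := by
  obtain ⟨hb, hh⟩ := isDyck_iff.mp hp
  obtain ⟨a, t, rfl⟩ := List.exists_cons_of_ne_nil hne
  obtain ⟨-, ht⟩ := ballotFrom_cons.mp hb
  obtain rfl : a = true := by
    cases a
    · simpa using ht.nonneg
    · rfl
  rcases List.eq_nil_or_concat' t with rfl | ⟨w, c, rfl⟩
  · simp at hh
  · refine ⟨w, ?_⟩
    cases c
    · rfl
    · have := (ballotFrom_append.mp ht).1.nonneg_add_netHeight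
      simp at hh this
      omega

/-- The lowest path of length `g` from height `h` without two consecutive up-steps. -/
def lowPath : ℕ → ℕ → List Bool
  | _, 0 => []
  | 0, 1 => [true]
  | 0, g + 2 => true :: false :: lowPath 0 g
  | h + 1, g + 1 => false :: lowPath h g

def lowPathEnd (h g : ℕ) : ℕ := if g ≤ h then h - g else (g - h) % 2

@[simp] lemma length_lowPath (h g : ℕ) : (lowPath h g).length = g := by
  induction h, g using lowPath.induct <;> simp [lowPath, *]

lemma netHeight_lowPath (h g : ℕ) : netHeight (lowPath h g) = lowPathEnd h g - h := by
  induction h, g using lowPath.induct <;>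
    simp only [lowPath, lowPathEnd, netHeight_cons, netHeight_nil] at * <;>
    split_ifs at * <;> simp_all <;> omega

lemma ballotFrom_lowPath (h g : ℕ) : BallotFrom h (lowPath h g) := by
  induction h, g using lowPath.induct <;> simp_all [lowPath, ballotFrom_cons, ballotFrom_nil]
  omega

lemma not_infix_lowPath (h g : ℕ) : ¬ [true, true] <:+: lowPath h g := by
  induction h, g using lowPath.induct <;> simp_all [lowPath, List.infix_cons_iff]

lemma occursAt_append_append {τ A B : List Bool} {i : ℕ} (hτ : IsUnbordered τ)
    (hA : ¬ τ <:+: A) :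
    OccursAt τ (A ++ τ ++ B) i ↔
      i = A.length ∨ ∃ j, i = A.length + τ.length + j ∧ OccursAt τ B j := by
  have hmid : OccursAt τ (A ++ τ ++ B) A.length := by
    rw [occursAt_iff_prefix, List.append_assoc, List.drop_left]
    exact List.prefix_append _ _
  have hright {j : ℕ} :
      OccursAt τ (A ++ τ ++ B) (A.length + τ.length + j) ↔ OccursAt τ B j := by
    rw [← List.length_append, occursAt_append_length_add]
  refine ⟨fun h => ?_, ?_⟩
  · rcases lt_trichotomy i A.length with hi | rfl | hi
    · have hlen := hτ.add_length_le h hmid hi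
      rw [List.append_assoc, occursAt_append_left hlen] at h
      exact absurd (h.isInfix) hA
    · exact Or.inl rfl
    · obtain ⟨j, rfl⟩ := Nat.exists_eq_add_of_le (hτ.add_length_le hmid h hi)
      exact Or.inr ⟨j, rfl, hright.mp h⟩
  · rintro (rfl | ⟨j, rfl, hj⟩)
    · exact hmid
    · exact hright.mpr hj

/-- Starting at height `r` at position `pos`, place the block `τ` at each position of `l` and join
the blocks (and finally the axis at position `total`) by lowest fillers. -/
def greedyPath (τ : List Bool) : ℕ → ℕ → List ℕ → ℕ → List Bool
  | r, pos, [], total => lowPath r (total - pos)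
  | r, pos, s :: l, total =>
      lowPath r (s - pos) ++ τ ++ greedyPath τ (lowPathEnd r (s - pos) + 1) (s + 3) l total

/-- `greedyPath τ r pos l total` is well formed (for blocks of length 3 and net height 1): the
blocks fit in order into `[pos, total]` and the last filler ends on the axis. -/
def GreedyFits : ℕ → ℕ → List ℕ → ℕ → Prop
  | r, pos, [], total => pos + r ≤ total ∧ (r + pos) % 2 = total % 2
  | r, pos, s :: l, total =>
      pos ≤ s ∧ s + 3 ≤ total ∧ GreedyFits (lowPathEnd r (s - pos) + 1) (s + 3) l total

lemma GreedyFits.le_of_mem {l : List ℕ} {r pos total : ℕ} (hl : GreedyFits r pos l total) :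
    ∀ x ∈ l, pos ≤ x := by
  induction l generalizing r pos with
  | nil => simp
  | cons s l ih =>
    obtain ⟨hs, -, hl⟩ := hl
    simpa [hs] using fun x hx => (ih hl x hx).trans' (by omega)

section greedyPath

variable {τ : List Bool} {l : List ℕ} {r pos total : ℕ}

lemma length_greedyPath (hτ : τ.length = 3) (hl : GreedyFits r pos l total) :
    (greedyPath τ r pos l total).length = total - pos := by
  induction l generalizing r pos with
  | nil => simp [greedyPath]
  | cons s l ih =>
    obtain ⟨hs, hst, hl⟩ := hl
    simp only [greedyPath, List.length_append, length_lowPath, hτ, ih hl]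
    omega

lemma netHeight_greedyPath (hτ : netHeight τ = 1) (hl : GreedyFits r pos l total) :
    netHeight (greedyPath τ r pos l total) = -r := by
  induction l generalizing r pos with
  | nil =>
    obtain ⟨hpos, hpar⟩ := hl
    simp only [greedyPath, netHeight_lowPath, lowPathEnd]
    split_ifs <;> omega
  | cons s l ih =>
    simp only [greedyPath, netHeight_append, netHeight_lowPath, hτ, ih hl.2.2]
    push_cast
    ring

lemma ballotFrom_greedyPath {e : ℤ} (hτ : netHeight τ = 1) (he : BallotFrom e τ) :
    BallotFrom (r + e) (greedyPath τ r pos l total) := by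
  induction l generalizing r pos with
  | nil => exact (ballotFrom_lowPath r _).mono (by linarith [he.nonneg])
  | cons s l ih =>
    simp only [greedyPath, ballotFrom_append, netHeight_append, netHeight_lowPath, hτ]
    refine ⟨⟨(ballotFrom_lowPath r _).mono (by linarith [he.nonneg]), he.mono (by omega)⟩,
      ?_⟩
    convert ih using 1
    push_cast
    ring

lemma occursAt_greedyPath (hτ : τ.length = 3) (hu : IsUnbordered τ) (hUU : [true, true] <:+: τ)
    (hl : GreedyFits r pos l total) {i : ℕ} :
    OccursAt τ (greedyPath τ r pos l total) i ↔ pos + i ∈ l := by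
  induction l generalizing r pos i with
  | nil =>
    simp only [greedyPath, List.not_mem_nil, iff_false]
    exact fun h => not_infix_lowPath _ _ (hUU.trans (h.isInfix))
  | cons s l ih =>
    obtain ⟨hs, -, hl⟩ := hl
    have hmem := hl.le_of_mem
    simp only [greedyPath, occursAt_append_append hu (fun h => not_infix_lowPath _ _ (hUU.trans h)),
      length_lowPath, hτ, ih hl, List.mem_cons]
    constructor
    · rintro (h | ⟨j, rfl, hj⟩)
      · omega
      · right; convert hj using 1; omega
    · rintro (h | h)
      · left; omega
      · right
        have := hmem _ h
        exact ⟨pos + i - (s + 3), by omega, by convert h using 1; omega⟩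

end greedyPath

/-- If some path `w` rises by one across each block position of `l` and is nonnegative there,
the greedy construction fits: inductively its height stays below that of `w`, with the same
parity. -/
lemma greedyFits_of_witness {w : List Bool} {total : ℕ} (htot : total ≤ w.length)
    (hend : pathHeight w total = 0) {l : List ℕ} (hsep : l.Pairwise (· + 3 ≤ ·))
    (hblock : ∀ s ∈ l, s + 3 ≤ total ∧ 0 ≤ pathHeight w s ∧
      pathHeight w (s + 3) = pathHeight w s + 1)
    {r pos : ℕ} (hpos : ∀ s ∈ l, pos ≤ s) (hpt : pos ≤ total)
    (hr : r ≤ pathHeight w pos)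
    (hpar : (r + pathHeight w pos) % 2 = 0) : GreedyFits r pos l total := by
  induction l generalizing r pos with
  | nil =>
    obtain ⟨u, v, huv, hh⟩ := exists_pathHeight_add w (a := pos) (d := total - pos) (by omega)
    rw [Nat.add_sub_cancel' hpt] at hh
    constructor <;> omega
  | cons s l ih =>
    obtain ⟨hsep_s, hsep⟩ := List.pairwise_cons.mp hsep
    obtain ⟨hs3, hs0, hjump⟩ := hblock s List.mem_cons_self
    have hs : pos ≤ s := hpos s List.mem_cons_self
    obtain ⟨u, v, huv, hh⟩ := exists_pathHeight_add w (a := pos) (d := s - pos) (by omega)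
    rw [Nat.add_sub_cancel' hs] at hh
    refine ⟨hs, hs3, ih hsep (fun x hx => hblock x (List.mem_cons_of_mem s hx)) hsep_s
      (by omega) ?_ ?_⟩ <;> unfold lowPathEnd <;> split_ifs <;> omega

def occurrences (τ w : List Bool) : List ℕ :=
  (List.range w.length).filter fun i => decide (OccursAt τ w i)

lemma mem_occurrences {τ w : List Bool} {i : ℕ} (hτ : τ ≠ []) :
    i ∈ occurrences τ w ↔ OccursAt τ w i := by
  simp only [occurrences, List.mem_filter, List.mem_range, decide_eq_true_eq,
    and_iff_right_iff_imp]
  intro h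
  have := h.add_length_le hτ
  have := List.length_pos_iff.mpr hτ
  omega

lemma pairwise_occurrences {τ w : List Bool} (hτ : IsUnbordered τ) :
    (occurrences τ w).Pairwise (· + τ.length ≤ ·) :=
  (List.pairwise_lt_range.sublist List.filter_sublist).imp_of_mem fun ha hb hab =>
    hτ.add_length_le (by simpa using (List.mem_filter.mp ha).2)
      (by simpa using (List.mem_filter.mp hb).2) hab

lemma PathEquiv.occurrences_eq {τ p q : List Bool} (h : PathEquiv τ p q) :
    occurrences τ p = occurrences τ q := by
  rw [occurrences, occurrences, h.1]
  exact List.filter_congr fun i _ => decide_eq_decide.mpr (h.2 i)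

lemma occursAt_tail {τ w : List Bool} {i : ℕ} :
    OccursAt τ w.tail i ↔ OccursAt τ w (i + 1) := by
  cases w <;> simp [OccursAt]

lemma PathEquiv.tail {τ p q : List Bool} (h : PathEquiv τ p q) : PathEquiv τ p.tail q.tail :=
  ⟨by simp [h.1], fun i => by simp only [occursAt_tail, h.2]⟩

lemma BallotFrom.not_occursAt_zero {p σ : List Bool} (hp : BallotFrom 0 p) :
    ¬ OccursAt (false :: σ) p 0 := fun h => by
  have := (h.of_prefix (σ := [false]) (by simp)).pathHeight_add_length
  have := hp 1
  simp_all

def toUUD (p : List Bool) : List Bool :=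
  greedyPath UUD 0 0 (occurrences DUU p.tail) (p.length - 2)

/-- `DUU`-blocks need height at least one before them, so they are built one unit above the axis,
between an initial up-step and a final down-step. -/
def toDUU (q : List Bool) : List Bool :=
  true :: (greedyPath DUU 0 0 (occurrences UUD q) q.length ++ [false])

lemma toUUD_spec {p : List Bool} (hp : IsDyck p) (hne : p ≠ []) :
    IsDyck (toUUD p) ∧ (toUUD p).length + 2 = p.length ∧
      ∀ i, OccursAt UUD (toUUD p) i ↔ OccursAt DUU p (i + 1) := by
  obtain ⟨w, rfl⟩ := hp.exists_eq_cons_append hne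
  obtain ⟨hw, hh⟩ := isDyck_cons_append.mp hp
  have hmem {s : ℕ} : s ∈ occurrences DUU (w ++ [false]) ↔ OccursAt DUU w s :=
    (mem_occurrences (by simp)).trans (occursAt_append_singleton (by simp))
  have hadm : GreedyFits 0 0 (occurrences DUU (w ++ [false])) w.length := by
    refine greedyFits_of_witness le_rfl (by rw [pathHeight_of_length_le le_rfl, hh])
      (pairwise_occurrences (τ := DUU) (by decide)) (fun s hs => ?_)
      (fun _ _ => Nat.zero_le _) (Nat.zero_le _) (by simp) (by simp)
    have hocc := hmem.mp hs
    have hdown := (hocc.of_prefix (σ := [false]) (by simp)).pathHeight_add_length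
    have hjump := hocc.pathHeight_add_length
    have hlen := hocc.add_length_le (by simp)
    have hbal := hw (s + 1)
    simp_all
  have hlen : (true :: (w ++ [false])).length - 2 = w.length := by simp
  simp only [toUUD, List.tail_cons, hlen]
  refine ⟨isDyck_iff.mpr ⟨?_, netHeight_greedyPath rfl hadm⟩, ?_, fun i => ?_⟩
  · have hτ : BallotFrom 0 UUD := by simp [ballotFrom_cons, ballotFrom_nil]
    simpa using ballotFrom_greedyPath (r := 0) (pos := 0)
      (l := occurrences DUU (w ++ [false])) (total := w.length) rfl hτ
  · simp [length_greedyPath (τ := UUD) rfl hadm]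
  · rw [occursAt_greedyPath (τ := UUD) rfl (by decide) ⟨[], [false], rfl⟩ hadm, zero_add, hmem,
      occursAt_cons_succ, occursAt_append_singleton (by simp)]

lemma toDUU_spec {q : List Bool} (hq : IsDyck q) :
    IsDyck (toDUU q) ∧ (toDUU q).length = q.length + 2 ∧
      ∀ i, OccursAt DUU (toDUU q) (i + 1) ↔ OccursAt UUD q i := by
  obtain ⟨hb, hh⟩ := isDyck_iff.mp hq
  have hmem {s : ℕ} : s ∈ occurrences UUD q ↔ OccursAt UUD q s :=
    mem_occurrences (by simp)
  have hadm : GreedyFits 0 0 (occurrences UUD q) q.length := by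
    refine greedyFits_of_witness le_rfl (by rw [pathHeight_of_length_le le_rfl, hh])
      (pairwise_occurrences (τ := UUD) (by decide)) (fun s hs => ?_)
      (fun _ _ => Nat.zero_le _) (Nat.zero_le _) (by simp) (by simp)
    have hocc := hmem.mp hs
    have hjump := hocc.pathHeight_add_length
    have hlen := hocc.add_length_le (by simp)
    have hbal := hb s
    simp_all
  have hτ : BallotFrom 1 DUU := by simp [ballotFrom_cons, ballotFrom_nil]
  refine ⟨isDyck_cons_append.mpr ⟨?_, netHeight_greedyPath rfl hadm⟩, ?_, fun i => ?_⟩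
  · simpa using ballotFrom_greedyPath (r := 0) (pos := 0)
      (l := occurrences UUD q) (total := q.length) rfl hτ
  · simp [toDUU, length_greedyPath (τ := DUU) rfl hadm]
  · rw [toDUU, occursAt_cons_succ, occursAt_append_singleton (by simp),
      occursAt_greedyPath (τ := DUU) rfl (by decide) ⟨[false], [], rfl⟩ hadm,
      zero_add, hmem]

lemma pathEquiv_toUUD {p p' : List Bool} (h : PathEquiv DUU p p') :
    PathEquiv UUD (toUUD p) (toUUD p') := by
  rw [toUUD, toUUD, h.1, h.tail.occurrences_eq]
  exact ⟨rfl, fun _ => Iff.rfl⟩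

lemma pathEquiv_toDUU {q q' : List Bool} (h : PathEquiv UUD q q') :
    PathEquiv DUU (toDUU q) (toDUU q') := by
  rw [toDUU, toDUU, h.1, h.occurrences_eq]
  exact ⟨rfl, fun _ => Iff.rfl⟩

lemma pathEquiv_toDUU_toUUD {p : List Bool} (hp : IsDyck p) (hne : p ≠ []) :
    PathEquiv DUU (toDUU (toUUD p)) p := by
  obtain ⟨hq, hqlen, hqocc⟩ := toUUD_spec hp hne
  obtain ⟨hr, hrlen, hrocc⟩ := toDUU_spec hq
  refine ⟨by omega, fun i => ?_⟩
  rcases i with _ | i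
  · exact iff_of_false (isDyck_iff.mp hr).1.not_occursAt_zero
      (isDyck_iff.mp hp).1.not_occursAt_zero
  · rw [hrocc, hqocc]

lemma pathEquiv_toUUD_toDUU {q : List Bool} (hq : IsDyck q) :
    PathEquiv UUD (toUUD (toDUU q)) q := by
  obtain ⟨hp, hplen, hpocc⟩ := toDUU_spec hq
  obtain ⟨-, hrlen, hrocc⟩ := toUUD_spec hp (by simp [toDUU])
  exact ⟨by omega, fun i => by rw [hrocc, hpocc]⟩

def quotientEquivOfRoundTrip {α β : Type*} {s : Setoid α} {t : Setoid β}
    (f : α → β) (g : β → α)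
    (hf : ∀ ⦃a b⦄, a ≈ b → f a ≈ f b) (hg : ∀ ⦃a b⦄, a ≈ b → g a ≈ g b)
    (hgf : ∀ a, g (f a) ≈ a) (hfg : ∀ b, f (g b) ≈ b) : Quotient s ≃ Quotient t where
  toFun := Quotient.map f hf
  invFun := Quotient.map g hg
  left_inv := Quotient.ind fun a => Quotient.sound (hgf a)
  right_inv := Quotient.ind fun b => Quotient.sound (hfg b)

def dyckToUUD (n : ℕ) (p : {p : List Bool // IsDyck p ∧ p.length = 2 * (n + 1)}) :
    {q : List Bool // IsDyck q ∧ q.length = 2 * n} :=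
  ⟨toUUD p.1, (toUUD_spec p.2.1 (List.ne_nil_of_length_pos (by omega))).1,
    by have := (toUUD_spec p.2.1 (List.ne_nil_of_length_pos (by omega))).2.1; omega⟩

def dyckToDUU (n : ℕ) (q : {q : List Bool // IsDyck q ∧ q.length = 2 * n}) :
    {p : List Bool // IsDyck p ∧ p.length = 2 * (n + 1)} :=
  ⟨toDUU q.1, (toDUU_spec q.2.1).1, by have := (toDUU_spec q.2.1).2.1; omega⟩

/-- the number of DUU-equivalence classes of Dyck paths of semilength
`n + 1` equals the number of UUD-equivalence classes of Dyck paths of semilength `n`. -/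
theorem duu_uud_dyck_classes_shift (n : ℕ) :
    numDyckClasses [false, true, true] (n + 1) =
      numDyckClasses [true, true, false] n :=
  Nat.card_congr <| quotientEquivOfRoundTrip (dyckToUUD n) (dyckToDUU n)
    (fun _ _ h => pathEquiv_toUUD h) (fun _ _ h => pathEquiv_toDUU h)
    (fun p => pathEquiv_toDUU_toUUD p.2.1 (List.ne_nil_of_length_pos (by omega)))
    (fun q => pathEquiv_toUUD_toDUU q.2.1)
end
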